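/- arXiv:2301.02354 — 2 statements merged into one kernel-verified Lean document; each statement's English description precedes it below -/
import Mathlib

section
/- Let Γ be a hyperbolic group and H < Γ a quasiconvex subgroup. For a sequence (γ_n) in Γ, define γ̂_n := pr_H(γ_n)⁻¹ γ_n. Then the sequence (γ̂_n), regarded in the compactification Γ̄ = Γ ⊔ ∂_∞Γ, has no accumulation points in ∂_∞H. -/
set_option maxHeartbeats 1000000


open Filter

/-- The Gromov product `(x,y)_w`. -/
noncomputable def gromovProd {Γ : Type*} [MetricSpace Γ] (x y w : Γ) : ℝ :=
  (dist x w + dist y w - dist x y) / 2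

/-- The metric is invariant under left multiplication. -/
def LeftInvariantMetric (Γ : Type*) [Group Γ] [MetricSpace Γ] : Prop :=
  ∀ g x y : Γ, dist (g * x) (g * y) = dist x y

/-- `δ`-hyperbolicity via the Gromov product inequality. -/
def IsDeltaHyperbolic (Γ : Type*) [MetricSpace Γ] (δ : ℝ) : Prop :=
  ∀ x y z w : Γ, min (gromovProd x z w) (gromovProd y z w) - δ ≤ gromovProd x y w

/-- A discrete geodesic segment `c : {0,…,n} → Γ`. -/
def IsGeodesicSeg {Γ : Type*} [MetricSpace Γ] (c : ℕ → Γ) (n : ℕ) : Prop :=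
  ∀ i j : ℕ, i ≤ n → j ≤ n → dist (c i) (c j) = |(i : ℝ) - (j : ℝ)|

/-- Every pair of points is joined by a discrete geodesic (as in a word metric). -/
def GeodesicMetric (Γ : Type*) [MetricSpace Γ] : Prop :=
  ∀ x y : Γ, ∃ (c : ℕ → Γ) (n : ℕ), IsGeodesicSeg c n ∧ c 0 = x ∧ c n = y

/-- `Y` is quasiconvex with constant `K`. -/
def QuasiconvexSubset {Γ : Type*} [MetricSpace Γ] (Y : Set Γ) (K : ℝ) : Prop :=
  ∀ y₁ ∈ Y, ∀ y₂ ∈ Y, ∀ (c : ℕ → Γ) (n : ℕ),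
    IsGeodesicSeg c n → c 0 = y₁ → c n = y₂ → ∀ i ≤ n, ∃ y ∈ Y, dist (c i) y ≤ K

/-- `p` is a nearest point projection onto `Y`. -/
def IsNearestPointProj {Γ : Type*} [MetricSpace Γ] (Y : Set Γ) (p : Γ → Γ) : Prop :=
  ∀ γ : Γ, p γ ∈ Y ∧ ∀ y ∈ Y, dist (p γ) γ ≤ dist y γ

/-- A sequence diverges to infinity in the Gromov sense (its Gromov products with
itself, based at `1`, tend to infinity). -/
def DivergesToInf {Γ : Type*} [Group Γ] [MetricSpace Γ] (s : ℕ → Γ) : Prop :=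
  Tendsto (fun q : ℕ × ℕ => gromovProd (s q.1) (s q.2) (1 : Γ)) atTop atTop

/-- Two sequences fellow travel: their Gromov products based at `1` tend to infinity. -/
def FellowTravel {Γ : Type*} [Group Γ] [MetricSpace Γ] (s t : ℕ → Γ) : Prop :=
  Tendsto (fun n => gromovProd (s n) (t n) (1 : Γ)) atTop atTop

/-- The Gromov boundary: divergent sequences modulo fellow-traveling. -/
def GromovBoundary (Γ : Type*) [Group Γ] [MetricSpace Γ] : Type _ :=
  Quot (fun s t : {s : ℕ → Γ // DivergesToInf s} => FellowTravel s.1 t.1)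

/-- A sequence converges to the boundary point `ε`. -/
def ConvToBdry {Γ : Type*} [Group Γ] [MetricSpace Γ] (s : ℕ → Γ) (ε : GromovBoundary Γ) :
    Prop :=
  ∃ h : DivergesToInf s, Quot.mk _ (⟨s, h⟩ : {s : ℕ → Γ // DivergesToInf s}) = ε

/-- `ε` is an accumulation point of the sequence `s` in the Gromov boundary. -/
def BdryAccPt {Γ : Type*} [Group Γ] [MetricSpace Γ] (s : ℕ → Γ) (ε : GromovBoundary Γ) :
    Prop :=
  ∃ φ : ℕ → ℕ, StrictMono φ ∧ ConvToBdry (s ∘ φ) ε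

/-- The accumulation set `∂_∞ Y` of a subset `Y ⊆ Γ` in the Gromov boundary. -/
def bdrySet {Γ : Type*} [Group Γ] [MetricSpace Γ] (Y : Set Γ) : Set (GromovBoundary Γ) :=
  {ε | ∃ s : ℕ → Γ, (∀ n, s n ∈ Y) ∧ ConvToBdry s ε}

section Aux

variable {Γ : Type*}

lemma gromovProd_symm [MetricSpace Γ] (x y w : Γ) :
    gromovProd x y w = gromovProd y x w := by
  unfold gromovProd; rw [dist_comm x y]; ring

lemma gromovProd_le_right [MetricSpace Γ] (x y w : Γ) :
    gromovProd x y w ≤ dist y w := by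
  have := dist_triangle x y w
  unfold gromovProd; linarith

lemma fellowTravel_symm [Group Γ] [MetricSpace Γ] {s t : ℕ → Γ}
    (h : FellowTravel s t) : FellowTravel t s := by
  unfold FellowTravel at *
  simpa only [gromovProd_symm] using h

lemma fellowTravel_trans [Group Γ] [MetricSpace Γ] {δ : ℝ}
    (hδ : IsDeltaHyperbolic Γ δ) {s t u : ℕ → Γ}
    (h1 : FellowTravel s t) (h2 : FellowTravel t u) : FellowTravel s u := by
  rw [FellowTravel, tendsto_atTop] at *
  intro b
  filter_upwards [h1 (b + δ), h2 (b + δ)] with n hn1 hn2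
  have key := hδ (s n) (u n) (t n) (1 : Γ)
  rw [gromovProd_symm (u n) (t n)] at key
  have : b + δ ≤ min (gromovProd (s n) (t n) 1) (gromovProd (t n) (u n) 1) :=
    le_min hn1 hn2
  linarith
lemma fellowTravel_refl [Group Γ] [MetricSpace Γ] {s : ℕ → Γ}
    (h : DivergesToInf s) : FellowTravel s s := by
  have hdiag : Filter.Tendsto (fun n : ℕ => (n, n)) Filter.atTop Filter.atTop := by
    rw [← Filter.prod_atTop_atTop_eq]
    exact Filter.tendsto_id.prodMk Filter.tendsto_id
  exact h.comp hdiag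

lemma quot_eq_fellowTravel [Group Γ] [MetricSpace Γ] {δ : ℝ}
    (hδ : IsDeltaHyperbolic Γ δ) {a b : {s : ℕ → Γ // DivergesToInf s}}
    (h : Quot.mk (fun s t : {s : ℕ → Γ // DivergesToInf s} => FellowTravel s.1 t.1) a =
         Quot.mk _ b) : FellowTravel a.1 b.1 := by
  have h' := Quot.eq.mp h
  clear h
  induction h' with
  | rel x y hxy => exact hxy
  | refl x => exact fellowTravel_refl x.2
  | symm x y _ ih => exact fellowTravel_symm ih
  | trans x y z _ _ ih1 ih2 => exact fellowTravel_trans hδ ih1 ih2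

/-- Key geometric lemma: if `1` is a nearest point of `H` to `x`, then Gromov products of
`x` with points of `H` based at `1` are uniformly bounded. -/
lemma key_bound [Group Γ] [MetricSpace Γ] {δ K : ℝ}
    (hgeo : GeodesicMetric Γ) (hδ : IsDeltaHyperbolic Γ δ)
    (H : Subgroup Γ) (hH : QuasiconvexSubset (H : Set Γ) K)
    (x : Γ) (hx : ∀ y ∈ (H : Set Γ), dist (1 : Γ) x ≤ dist y x)
    (h : Γ) (hmem : h ∈ (H : Set Γ)) :
    gromovProd x h 1 ≤ max ((⌈K + 2 * δ⌉₊ + 1 : ℕ) : ℝ)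
      (((⌈K + 2 * δ⌉₊ + 1 : ℕ) + K) / 2 + δ) := by
  set i : ℕ := ⌈K + 2 * δ⌉₊ + 1 with hidef
  have hi : K + 2 * δ < (i : ℝ) := by
    have := Nat.le_ceil (K + 2 * δ)
    have : (⌈K + 2 * δ⌉₊ : ℝ) < i := by exact_mod_cast Nat.lt_succ_self _
    have := Nat.le_ceil (K + 2 * δ)
    linarith
  obtain ⟨c, n, hc, hc0, hcn⟩ := hgeo (1 : Γ) h
  have hn : dist (1 : Γ) h = (n : ℝ) := by
    have := hc 0 n (Nat.zero_le n) le_rfl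
    rw [hc0, hcn] at this
    rw [this]
    simp [abs_of_nonpos]
  by_cases hin : i ≤ n
  · have hci1 : dist (c i) (1 : Γ) = (i : ℝ) := by
      have := hc i 0 hin (Nat.zero_le n)
      rw [hc0] at this
      rw [this]; simp
    have hcih : dist (c i) h = (n : ℝ) - (i : ℝ) := by
      have := hc i n hin le_rfl
      rw [hcn] at this
      rw [this, abs_sub_comm, abs_of_nonneg (sub_nonneg.mpr (Nat.cast_le.mpr hin))]
    obtain ⟨y', hy', hyd⟩ := hH 1 (Subgroup.one_mem H) h hmem c n hc hc0 hcn i hin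
    have h1 : dist (1 : Γ) x ≤ dist y' x := hx y' hy'
    have h2 : dist (1 : Γ) x - K ≤ dist x (c i) := by
      have ht := dist_triangle y' (c i) x
      rw [dist_comm y' (c i)] at ht
      rw [dist_comm x (c i)]
      linarith
    have gb1 : gromovProd x (c i) 1 ≤ ((i : ℝ) + K) / 2 := by
      unfold gromovProd
      rw [dist_comm x (1 : Γ), hci1]
      linarith
    have gb2 : gromovProd h (c i) 1 = (i : ℝ) := by
      unfold gromovProd
      rw [dist_comm h (1 : Γ), hn, hci1, dist_comm h (c i), hcih]
      ring
    have hyp := hδ x (c i) h (1 : Γ)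
    rw [gromovProd_symm h (c i)] at gb2
    rw [gb2] at hyp
    by_cases hcase : gromovProd x h 1 ≤ (i : ℝ)
    · have : min (gromovProd x h 1) (i : ℝ) = gromovProd x h 1 := min_eq_left hcase
      rw [this] at hyp
      exact le_max_of_le_right (by linarith)
    · push_neg at hcase
      have : min (gromovProd x h 1) (i : ℝ) = (i : ℝ) := min_eq_right hcase.le
      rw [this] at hyp
      linarith
  · push_neg at hin
    have : gromovProd x h 1 ≤ (n : ℝ) := by
      have := gromovProd_le_right x h 1
      rw [dist_comm h (1 : Γ), hn] at this
      exact this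
    have hni : (n : ℝ) ≤ (i : ℝ) := by exact_mod_cast hin.le
    exact le_max_of_le_left (by linarith)

end Aux

/-- for a quasiconvex subgroup `H` of a hyperbolic group with nearest point
projection `p`, the sequence `γ̂_n = (p (γ_n))⁻¹ γ_n` has no accumulation points in `∂_∞H`. -/
theorem stmt2 {Γ : Type*} [Group Γ] [MetricSpace Γ] (δ K : ℝ)
    (hinv : LeftInvariantMetric Γ) (hgeo : GeodesicMetric Γ)
    (hδ : IsDeltaHyperbolic Γ δ)
    (H : Subgroup Γ) (p : Γ → Γ) (hH : QuasiconvexSubset (H : Set Γ) K)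
    (hp : IsNearestPointProj (H : Set Γ) p) (γ : ℕ → Γ) :
    ∀ ε ∈ bdrySet (H : Set Γ), ¬ BdryAccPt (fun n => (p (γ n))⁻¹ * γ n) ε := by
  rintro ε ⟨s, hsH, hdivs, hqs⟩ ⟨φ, hφ, hdivt, hqt⟩
  have hquot : Quot.mk (fun s t : {s : ℕ → Γ // DivergesToInf s} => FellowTravel s.1 t.1)
      ⟨(fun n => (p (γ n))⁻¹ * γ n) ∘ φ, hdivt⟩ = Quot.mk _ ⟨s, hdivs⟩ := by
    rw [hqt, ← hqs]
  have hFT := quot_eq_fellowTravel hδ hquot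
  have hFT' : FellowTravel (fun n => (p (γ (φ n)))⁻¹ * γ (φ n)) s := hFT
  set C : ℝ := max ((⌈K + 2 * δ⌉₊ + 1 : ℕ) : ℝ) (((⌈K + 2 * δ⌉₊ + 1 : ℕ) + K) / 2 + δ) with hC
  have hbd : ∀ n, gromovProd ((p (γ (φ n)))⁻¹ * γ (φ n)) (s n) 1 ≤ C := by
    intro n
    apply key_bound hgeo hδ H hH
    · intro y hy
      have e1 : dist (1 : Γ) ((p (γ (φ n)))⁻¹ * γ (φ n)) = dist (p (γ (φ n))) (γ (φ n)) := by
        have := hinv (p (γ (φ n))) 1 ((p (γ (φ n)))⁻¹ * γ (φ n))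
        rw [mul_one, mul_inv_cancel_left] at this
        exact this.symm
      have e2 : dist y ((p (γ (φ n)))⁻¹ * γ (φ n)) = dist (p (γ (φ n)) * y) (γ (φ n)) := by
        have := hinv (p (γ (φ n))) y ((p (γ (φ n)))⁻¹ * γ (φ n))
        rw [mul_inv_cancel_left] at this
        exact this.symm
      rw [e1, e2]
      exact (hp (γ (φ n))).2 _ (mul_mem (hp (γ (φ n))).1 hy)
    · exact hsH n
  obtain ⟨n, hn⟩ := (hFT'.eventually_ge_atTop (C + 1)).exists
  have := hbd n
  linarith
end

section
/- Let (M; H₊, H₋; f) admit an interactive triple (A, B₊, B₋) in Flag(τ_mod), where H₊ = M ∩ fMf⁻¹ and H₋ = f⁻¹Mf ∩ M. Then the natural homomorphism M⋆_φ → G from the abstract HNN extension (with φ(η) = fηf⁻¹ for η ∈ H₋) is injective; in particular ⟨M, f⟩ ≅ M⋆_φ. -/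
open HNNExtension

/-- product of the letters `t^u * g` under the lift sending `t ↦ f`, `of g ↦ g`. -/
def ppP {G : Type*} [Group G] (f : G) {M : Subgroup G} (L : List (ℤˣ × ↥M)) : G :=
  (L.map fun p => f ^ (p.1 : ℤ) * ((p.2 : ↥M) : G)).prod

theorem ppP_cons {G : Type*} [Group G] (f : G) {M : Subgroup G} (a : ℤˣ × ↥M)
    (L : List (ℤˣ × ↥M)) :
    ppP f (a :: L) = f ^ (a.1 : ℤ) * ((a.2 : ↥M) : G) * ppP f L := by
  simp [ppP, mul_assoc]

theorem units_int_cases (u v : ℤˣ) (h : u ≠ v) : u = -v := by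
  rcases Int.units_eq_one_or u with rfl | rfl <;>
    rcases Int.units_eq_one_or v with rfl | rfl <;> simp_all

theorem pp_forward {G F : Type*} [Group G] [MulAction G F]
    (f : G) {M : Subgroup G} (A' B' : Subgroup ↥M)
    (A : Set F) (Bu : ℤˣ → Set F)
    (hfF : ∀ (u : ℤˣ) (x : F), (x ∈ A ∨ x ∈ Bu u) → f ^ (u : ℤ) • x ∈ Bu u)
    (hStabF : ∀ (u : ℤˣ) (g : ↥M), g ∈ toSubgroup A' B' (-u) →
      ∀ x ∈ Bu u, (g : G) • x ∈ Bu u)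
    (hPushF : ∀ (u : ℤˣ) (g : ↥M), g ∉ toSubgroup A' B' (-u) →
      ∀ x ∈ Bu u, (g : G) • x ∈ A) :
    ∀ (L : List (ℤˣ × ↥M)) (hL : L ≠ []),
      (L.Chain' fun a b => a.2 ∈ toSubgroup A' B' a.1 → a.1 = b.1) →
      ∀ x : F, (x ∈ A ∨ x ∈ Bu (L.getLast hL).1) →
        (ppP f L * ((L.getLast hL).2 : G)⁻¹) • x ∈ Bu (L.head hL).1 := by
  intro L
  induction L with
  | nil => intro h; exact absurd rfl h
  | cons a L ih =>
    intro hL hc x hx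
    rcases eq_or_ne L [] with rfl | hL0
    · have he : ppP f [a] * ((a.2 : ↥M) : G)⁻¹ = f ^ (a.1 : ℤ) := by
        simp [ppP, mul_assoc]
      simp only [List.getLast_singleton] at hx
      simpa [he] using hfF a.1 x hx
    · have hgl : (a :: L).getLast hL = L.getLast hL0 := List.getLast_cons hL0
      have hhd : (a :: L).head hL = a := rfl
      simp only [List.Chain', List.isChain_cons] at hc
      have hR : a.2 ∈ toSubgroup A' B' a.1 → a.1 = (L.head hL0).1 :=
        hc.1 (L.head hL0) (by simp [List.head?_eq_head hL0])
      rw [hgl] at hx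
      have ihy := ih hL0 hc.2 x hx
      set y := (ppP f L * ((L.getLast hL0).2 : G)⁻¹) • x with hy
      have key : ((a.2 : ↥M) : G) • y ∈ A ∨ ((a.2 : ↥M) : G) • y ∈ Bu a.1 := by
        by_cases hg : a.2 ∈ toSubgroup A' B' (-(L.head hL0).1)
        · have hu : a.1 = (L.head hL0).1 := by
            by_contra hne
            have h1 : a.1 = -(L.head hL0).1 := units_int_cases _ _ hne
            exact hne (hR (h1 ▸ hg))
          right
          rw [hu]
          exact hStabF _ _ hg y ihy
        · exact Or.inl (hPushF _ _ hg y ihy)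
      have hgoal := hfF a.1 _ key
      rw [hgl, hhd, ppP_cons]
      rw [mul_assoc, mul_assoc, mul_smul, mul_smul]
      exact hgoal

theorem pp_backward {G F : Type*} [Group G] [MulAction G F]
    (f : G) {M : Subgroup G} (A' B' : Subgroup ↥M)
    (A : Set F) (Bu : ℤˣ → Set F)
    (hfF : ∀ (u : ℤˣ) (x : F), (x ∈ A ∨ x ∈ Bu u) → f ^ (u : ℤ) • x ∈ Bu u)
    (hStabF : ∀ (u : ℤˣ) (g : ↥M), g ∈ toSubgroup A' B' (-u) →
      ∀ x ∈ Bu u, (g : G) • x ∈ Bu u)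
    (hPushF : ∀ (u : ℤˣ) (g : ↥M), g ∉ toSubgroup A' B' (-u) →
      ∀ x ∈ Bu u, (g : G) • x ∈ A) :
    ∀ (L : List (ℤˣ × ↥M)) (hL : L ≠ []),
      (L.Chain' fun a b => a.2 ∈ toSubgroup A' B' a.1 → a.1 = b.1) →
      ∀ x : F, (x ∈ A ∨ x ∈ Bu (-(L.head hL).1)) →
        (((L.getLast hL).2 : G) * (ppP f L)⁻¹) • x ∈ Bu (-(L.getLast hL).1) := by
  intro L
  induction L with
  | nil => intro h; exact absurd rfl h
  | cons a L ih =>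
    intro hL hc x hx
    have hfneg : ∀ z : F, (z ∈ A ∨ z ∈ Bu (-a.1)) →
        (f ^ (a.1 : ℤ))⁻¹ • z ∈ Bu (-a.1) := by
      intro z hz
      have := hfF (-a.1) z hz
      rwa [Units.val_neg, zpow_neg] at this
    rcases eq_or_ne L [] with rfl | hL0
    · have he : ((a.2 : ↥M) : G) * (ppP f [a])⁻¹ = (f ^ (a.1 : ℤ))⁻¹ := by
        simp [ppP, mul_inv_rev, mul_assoc]
      simp only [List.getLast_singleton]
      rw [he]
      exact hfneg x hx
    · have hgl : (a :: L).getLast hL = L.getLast hL0 := List.getLast_cons hL0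
      simp only [List.Chain', List.isChain_cons] at hc
      have hR : a.2 ∈ toSubgroup A' B' a.1 → a.1 = (L.head hL0).1 :=
        hc.1 (L.head hL0) (by simp [List.head?_eq_head hL0])
      set z := (f ^ (a.1 : ℤ))⁻¹ • x with hzdef
      have hz : z ∈ Bu (-a.1) := hfneg x hx
      have key : ((a.2⁻¹ : ↥M) : G) • z ∈ A ∨
          ((a.2⁻¹ : ↥M) : G) • z ∈ Bu (-(L.head hL0).1) := by
        by_cases hg : a.2 ∈ toSubgroup A' B' a.1
        · have hu : a.1 = (L.head hL0).1 := hR hg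
          right
          rw [← hu]
          exact hStabF (-a.1) a.2⁻¹ (by rw [neg_neg]; exact inv_mem hg) z hz
        · left
          refine hPushF (-a.1) a.2⁻¹ ?_ z hz
          rw [neg_neg]
          exact fun h => hg (inv_mem_iff.mp h)
      have hgoal := ih hL0 hc.2 _ key
      rw [hgl]
      have hcoe : ((a.2⁻¹ : ↥M) : G) = ((a.2 : ↥M) : G)⁻¹ := by simp
      rw [ppP_cons, mul_inv_rev, mul_inv_rev, ← mul_assoc, ← mul_assoc,
        mul_smul, mul_smul, ← hcoe]
      exact hgoal




/-- let `M < G` be discrete, `f ∈ G`, `H₋ = f⁻¹Mf ∩ M` and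
`H₊ = M ∩ fMf⁻¹`, regarded as the subgroups `A'` (of elements `μ ∈ M` with `fμf⁻¹ ∈ M`)
and `B'` (of elements `μ ∈ M` with `f⁻¹μf ∈ M`) of `M`, and `φ : H₋ ≃ H₊` the isomorphism
`φ(η) = fηf⁻¹`.  If `(M; H±; f)` admits an interactive triple `(A, B₊, B₋)` in the flag
manifold, then the natural homomorphism `M⋆_φ → G` from the abstract HNN extension —
sending `of μ ↦ μ` and the stable letter `t ↦ f` — is injective, and its image is
`⟨M, f⟩ = M ⊔ ⟨f⟩`. -/
theorem stmt14 {G F : Type*} [Group G] [TopologicalSpace G] [IsTopologicalGroup G]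
    [TopologicalSpace F] [MulAction G F]
    (M : Subgroup G) (f : G) (hdM : DiscreteTopology ↥M)
    -- `A' = H₋` and `B' = H₊` as subgroups of `M`, and `φ` is conjugation by `f`
    (A' B' : Subgroup ↥M) (φ : A' ≃* B')
    (hA' : ∀ x : ↥M, x ∈ A' ↔ f * (x : G) * f⁻¹ ∈ M)
    (hB' : ∀ x : ↥M, x ∈ B' ↔ f⁻¹ * (x : G) * f ∈ M)
    (hφ : ∀ a : A', ((φ a : ↥M) : G) = f * ((a : ↥M) : G) * f⁻¹)
    (hcomm : ∀ a : A', f * (M.subtype (a : ↥M)) = M.subtype ((φ a : B') : ↥M) * f)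
    -- the interactive triple `(A, B₊, B₋)`
    (A Bp Bm : Set F)
    (hAc : IsCompact A) (hBpc : IsCompact Bp) (hBmc : IsCompact Bm)
    (hAi : (interior A).Nonempty) (hBpi : (interior Bp).Nonempty)
    (hBmi : (interior Bm).Nonempty)
    (hdAp : interior A ∩ interior Bp = ∅) (hdAm : interior A ∩ interior Bm = ∅)
    (hdpm : interior Bp ∩ interior Bm = ∅) (hBpm : Bp ∩ Bm = ∅)
    (hHp : ∀ μ ∈ M, f⁻¹ * μ * f ∈ M → (fun x => μ • x) '' Bp = Bp)
    (hHm : ∀ μ ∈ M, f * μ * f⁻¹ ∈ M → (fun x => μ • x) '' Bm = Bm)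
    (hMp : ∀ μ ∈ M, f⁻¹ * μ * f ∉ M → (fun x => μ • x) '' Bp ⊆ interior A)
    (hMm : ∀ μ ∈ M, f * μ * f⁻¹ ∉ M → (fun x => μ • x) '' Bm ⊆ interior A)
    (hfA : (fun x => f • x) '' A ⊆ Bp) (hfiA : (fun x => f⁻¹ • x) '' A ⊆ Bm)
    (hfB : (fun x => f • x) '' Bp ⊆ interior Bp)
    (hfiB : (fun x => f⁻¹ • x) '' Bm ⊆ interior Bm) :
    Function.Injective (HNNExtension.lift (G := ↥M) (A := A') (B := B') (φ := φ)
        M.subtype f hcomm) ∧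
      (HNNExtension.lift (G := ↥M) (A := A') (B := B') (φ := φ)
        M.subtype f hcomm).range = M ⊔ Subgroup.zpowers f := by
  classical
  set N := HNNExtension.lift (G := ↥M) (A := A') (B := B') (φ := φ) M.subtype f hcomm with hNdef
  -- the selector for the two sets
  set Bu : ℤˣ → Set F := fun u => if u = 1 then Bp else Bm with hBudef
  have hBu1 : Bu 1 = Bp := if_pos rfl
  have hBum : Bu (-1) = Bm := if_neg (by decide)
  -- basic dynamical facts
  have hfF : ∀ (u : ℤˣ) (x : F), (x ∈ A ∨ x ∈ Bu u) → f ^ (u : ℤ) • x ∈ Bu u := by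
    intro u x hx
    rcases Int.units_eq_one_or u with rfl | rfl
    · rw [hBu1] at hx ⊢
      have hz : f ^ ((1 : ℤˣ) : ℤ) = f := by norm_num
      rw [hz]
      rcases hx with hx | hx
      · exact hfA ⟨x, hx, rfl⟩
      · exact interior_subset (hfB ⟨x, hx, rfl⟩)
    · rw [hBum] at hx ⊢
      have hz : f ^ (((-1 : ℤˣ)) : ℤ) = f⁻¹ := by norm_num
      rw [hz]
      rcases hx with hx | hx
      · exact hfiA ⟨x, hx, rfl⟩
      · exact interior_subset (hfiB ⟨x, hx, rfl⟩)
  have hStabF : ∀ (u : ℤˣ) (g : ↥M), g ∈ toSubgroup A' B' (-u) →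
      ∀ x ∈ Bu u, (g : G) • x ∈ Bu u := by
    intro u g hg x hx
    rcases Int.units_eq_one_or u with rfl | rfl
    · rw [hBu1] at hx ⊢
      have hgB : g ∈ B' := hg
      have himg := hHp (g : G) g.2 ((hB' g).1 hgB)
      rw [← himg]
      exact ⟨x, hx, rfl⟩
    · rw [hBum] at hx ⊢
      have hgA : g ∈ A' := by rwa [neg_neg] at hg
      have himg := hHm (g : G) g.2 ((hA' g).1 hgA)
      rw [← himg]
      exact ⟨x, hx, rfl⟩
  have hPushF : ∀ (u : ℤˣ) (g : ↥M), g ∉ toSubgroup A' B' (-u) →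
      ∀ x ∈ Bu u, (g : G) • x ∈ A := by
    intro u g hg x hx
    rcases Int.units_eq_one_or u with rfl | rfl
    · rw [hBu1] at hx
      have hgB : g ∉ B' := hg
      have himg := hMp (g : G) g.2 (fun h => hgB ((hB' g).2 h))
      exact interior_subset (himg ⟨x, hx, rfl⟩)
    · rw [hBum] at hx
      have hgA : g ∉ A' := by rwa [neg_neg] at hg
      have himg := hMm (g : G) g.2 (fun h => hgA ((hA' g).2 h))
      exact interior_subset (himg ⟨x, hx, rfl⟩)
  -- disjointness facts
  have hT1 : ∀ u : ℤˣ, interior A ∩ interior (Bu u) = ∅ := by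
    intro u
    rcases Int.units_eq_one_or u with rfl | rfl
    · rw [hBu1]; exact hdAp
    · rw [hBum]; exact hdAm
  have hT2 : ∀ u : ℤˣ, Bu u ∩ Bu (-u) = ∅ := by
    intro u
    rcases Int.units_eq_one_or u with rfl | rfl
    · rw [hBu1, hBum]; exact hBpm
    · rw [hBum, neg_neg, hBu1, Set.inter_comm]; exact hBpm
  have hT3 : ∀ u : ℤˣ, (Bu u).Nonempty := by
    intro u
    rcases Int.units_eq_one_or u with rfl | rfl
    · rw [hBu1]; exact hBpi.mono interior_subset
    · rw [hBum]; exact hBmi.mono interior_subset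
  have hC1 : ∀ u : ℤˣ, ¬ (A ⊆ Bu u) := by
    intro u hsub
    obtain ⟨p, hp⟩ := hAi
    have hint : interior A ⊆ interior (Bu u) :=
      interior_maximal (interior_subset.trans hsub) isOpen_interior
    have : p ∈ interior A ∩ interior (Bu u) := ⟨hp, hint hp⟩
    rw [hT1 u] at this
    exact this
  -- the core of the argument: kernel is trivial
  have hker : ∀ x : HNNExtension ↥M A' B' φ, N x = 1 → x = 1 := by
    intro x hx1
    obtain ⟨d⟩ := HNNExtension.NormalWord.TransversalPair.nonempty ↥M A' B'
    set w : HNNExtension.NormalWord d := x • HNNExtension.NormalWord.empty with hwdef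
    have hw : w.prod φ = x := by
      rw [hwdef, HNNExtension.NormalWord.prod_smul, HNNExtension.NormalWord.prod_empty, mul_one]
    have hmap : ∀ p : ℤˣ × ↥M,
        N (HNNExtension.t ^ (p.1 : ℤ) * HNNExtension.of p.2) =
          f ^ (p.1 : ℤ) * ((p.2 : ↥M) : G) := by
      intro p
      rw [map_mul, map_zpow, HNNExtension.lift_t, HNNExtension.lift_of]
      rfl
    have hNprod : N (w.prod φ) = ((w.head : ↥M) : G) * ppP f w.toList := by
      rw [HNNExtension.NormalWord.ReducedWord.prod]
      rw [map_mul, map_list_prod, HNNExtension.lift_of, List.map_map]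
      congr 1
      unfold ppP
      congr 1
      exact List.map_congr_left fun p _ => hmap p
    have hkey : ((w.head : ↥M) : G) * ppP f w.toList = 1 := by
      rw [← hNprod, hw, hx1]
    by_cases hnil : w.toList = []
    · have hhead : ((w.head : ↥M) : G) = 1 := by
        simpa [ppP, hnil] using hkey
      have hhead1 : w.head = 1 := by exact_mod_cast hhead
      rw [← hw, HNNExtension.NormalWord.ReducedWord.prod, hnil, hhead1]
      simp
    · exfalso
      set L := w.toList with hLdef
      have hch : L.Chain' (fun a b => a.2 ∈ toSubgroup A' B' a.1 → a.1 = b.1) := w.chain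
      have hP : ppP f L = ((w.head : ↥M) : G)⁻¹ := by
        have h2 := congrArg (fun z => ((w.head : ↥M) : G)⁻¹ * z) hkey
        simpa [← mul_assoc] using h2
      set μ : ↥M := ((L.getLast hnil).2 * w.head)⁻¹ with hμdef
      have hμf : ppP f L * (((L.getLast hnil).2 : ↥M) : G)⁻¹ = (μ : G) := by
        rw [hP, hμdef]
        push_cast
        rw [mul_inv_rev]
      have hμb : (((L.getLast hnil).2 : ↥M) : G) * (ppP f L)⁻¹ = ((μ : G))⁻¹ := by
        rw [hP, hμdef]
        push_cast
        simp [mul_inv_rev]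
      have hPPf : ∀ y : F, (y ∈ A ∨ y ∈ Bu (L.getLast hnil).1) →
          (μ : G) • y ∈ Bu (L.head hnil).1 := by
        intro y hy
        have := pp_forward f A' B' A Bu hfF hStabF hPushF L hnil hch y hy
        rwa [hμf] at this
      have hPPb : ∀ y : F, (y ∈ A ∨ y ∈ Bu (-(L.head hnil).1)) →
          ((μ : G))⁻¹ • y ∈ Bu (-(L.getLast hnil).1) := by
        intro y hy
        have := pp_backward f A' B' A Bu hfF hStabF hPushF L hnil hch y hy
        rwa [hμb] at this
      set u1 : ℤˣ := (L.head hnil).1 with hu1def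
      set un : ℤˣ := (L.getLast hnil).1 with hundef
      have hdisj : ∀ (u : ℤˣ) (q : F), q ∈ Bu u → q ∈ Bu (-u) → False := by
        intro u q h1 h2
        have := hT2 u
        rw [Set.eq_empty_iff_forall_notMem] at this
        exact this q ⟨h1, h2⟩
      by_cases h1 : μ ∈ toSubgroup A' B' (-u1)
      · refine hC1 u1 fun a ha => ?_
        have h2 := hPPf a (Or.inl ha)
        have h3 := hStabF u1 μ⁻¹ (inv_mem h1) _ h2
        have h4 : ((μ⁻¹ : ↥M) : G) • (μ : G) • a = a := by
          push_cast
          rw [inv_smul_smul]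
        rwa [h4] at h3
      by_cases h2 : μ ∈ toSubgroup A' B' un
      · refine hC1 (-un) fun a ha => ?_
        have hb := hPPb a (Or.inl ha)
        have h3 := hStabF (-un) μ (by rwa [neg_neg]) _ hb
        rwa [smul_inv_smul] at h3
      by_cases h3 : un = u1
      · obtain ⟨q, hq⟩ := hT3 (-u1)
        have h4 : (μ⁻¹ : ↥M) ∉ toSubgroup A' B' (-(-u1)) := by
          rw [neg_neg]
          intro hmem
          exact h2 (h3 ▸ inv_mem_iff.mp hmem)
        have hq1 : ((μ : G))⁻¹ • q ∈ A := by
          have := hPushF (-u1) μ⁻¹ h4 q hq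
          rwa [show ((μ⁻¹ : ↥M) : G) = ((μ : G))⁻¹ by push_cast; rfl] at this
        have hq2 := hPPf _ (Or.inl hq1)
        rw [smul_inv_smul] at hq2
        exact hdisj u1 q hq2 hq
      · have h4 : un = -u1 := units_int_cases _ _ h3
        by_cases h5 : μ ∈ toSubgroup A' B' u1
        · obtain ⟨q, hq⟩ := hT3 (-u1)
          have hq1 : (μ : G) • q ∈ Bu (-u1) :=
            hStabF (-u1) μ (by rwa [neg_neg]) q hq
          have hq2 : (μ : G) • q ∈ Bu u1 := hPPf q (Or.inr (by rwa [h4]))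
          exact hdisj u1 _ hq2 hq1
        · obtain ⟨q, hq⟩ := hT3 (-u1)
          have hq2 : (μ : G) • q ∈ Bu u1 := hPPf q (Or.inr (by rwa [h4]))
          have hqA : (μ : G) • q ∈ A := by
            have := hPushF (-u1) μ (by rwa [neg_neg]) q hq
            exact this
          have hq3 := hPPb _ (Or.inl hqA)
          rw [inv_smul_smul, h4, neg_neg] at hq3
          exact hdisj u1 q hq3 hq
  refine ⟨(injective_iff_map_eq_one N).mpr hker, le_antisymm ?_ ?_⟩
  · rintro y ⟨x, rfl⟩
    refine HNNExtension.induction_on x (fun g => ?_) ?_ (fun a b ha hb => ?_)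
      (fun a ha => ?_)
    · rw [hNdef, HNNExtension.lift_of]
      exact Subgroup.mem_sup_left g.2
    · rw [hNdef, HNNExtension.lift_t]
      exact Subgroup.mem_sup_right (Subgroup.mem_zpowers f)
    · rw [map_mul]
      exact mul_mem ha hb
    · rw [map_inv]
      exact inv_mem ha
  · refine sup_le (fun g hg => ?_)
      (Subgroup.zpowers_le.mpr ⟨HNNExtension.t, HNNExtension.lift_t _ _ _⟩)
    exact ⟨HNNExtension.of ⟨g, hg⟩, by rw [hNdef, HNNExtension.lift_of]; rfl⟩
end
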